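/- The map α_A preserves the harmonic product: α_A(w₁ * w₂) = α_A(w₁) * α_A(w₂) for all w₁, w₂ ∈ 𝔥¹ = ℚ ⊕ y𝔥. -/

import Mathlib

open scoped BigOperators

abbrev Ltr := Fin 2

/-- `𝔥 = ℚ⟨x,y⟩`, realized as the monoid algebra of the free monoid on two letters. -/
abbrev H := MonoidAlgebra ℚ (FreeMonoid Ltr)

/-- The word `u₁⋯u_m` as an element of `𝔥`. -/
noncomputable def wrd (l : List Ltr) : H := MonoidAlgebra.of ℚ (FreeMonoid Ltr) (FreeMonoid.ofList l)

/-- The generator `x`. -/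
noncomputable def Xh : H := wrd [0]
/-- The generator `y`. -/
noncomputable def Yh : H := wrd [1]

/-- Letter produced when stuffling letters `u, v`: `y` iff both are `y`, else `x`. -/
noncomputable def ellt (a b : Ltr) : H := if a = 1 ∧ b = 1 then Yh else Xh
def cc1 (a b : Ltr) : ℚ := if a = 1 ∧ b = 0 then -1 else 1
def cc2 (a b : Ltr) : ℚ := if a = 0 ∧ b = 1 then -1 else 1
def cc3 (a b : Ltr) : ℚ := if a = 0 ∧ b = 0 then -1 else 1

/-- The harmonic (stuffle) product on words of `𝔥`: on `𝔥¹` it is Hoffman's harmonic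
product defined by `w*1 = 1*w = w` and
`z_k w₁ * z_l w₂ = z_k(w₁ * z_l w₂) + z_l(z_k w₁ * w₂) + z_{k+l}(w₁ * w₂)` with
`z_n = yx^{n-1}`, extended to all of `𝔥` (compatibly, via `w₁e₁ ⊛̃ w₂e₁ = (w₁*w₂)e₁`). -/
noncomputable def starW : List Ltr → List Ltr → H
  | [], v => wrd v
  | u, [] => wrd u
  | a :: u, b :: v =>
      cc1 a b • (ellt a b * starW u (b :: v)) + cc2 a b • (ellt a b * starW (a :: u) v)
      + cc3 a b • (ellt a b * Xh * starW u v)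
termination_by u v => u.length + v.length

/-- The harmonic product `*` on `𝔥`, extended bilinearly. -/
noncomputable def star (f g : H) : H :=
  f.coeff.sum fun u cu => g.coeff.sum fun v cv => (cu * cv) • starW u.toList v.toList

/-- The shuffle product on words: `w⧢1 = 1⧢w = w`,
`u₁w₁ ⧢ u₂w₂ = u₁(w₁ ⧢ u₂w₂) + u₂(u₁w₁ ⧢ w₂)`. -/
noncomputable def shW : List Ltr → List Ltr → H
  | [], v => wrd v
  | u, [] => wrd u
  | a :: u, b :: v => wrd [a] * shW u (b :: v) + wrd [b] * shW (a :: u) v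
termination_by u v => u.length + v.length

/-- The shuffle product `⧢` on `𝔥`, extended bilinearly. -/
noncomputable def shuf (f g : H) : H :=
  f.coeff.sum fun u cu => g.coeff.sum fun v cv => (cu * cv) • shW u.toList v.toList

abbrev PS := PowerSeries H

/-- The harmonic product `*` extended coefficientwise to `𝔥[[T]]` (resp. `𝔥[[A]]`). -/
noncomputable def starPS (f g : PS) : PS :=
  PowerSeries.mk fun n =>
    ∑ p ∈ Finset.HasAntidiagonal.antidiagonal n,
      star (PowerSeries.coeff (R := H) p.1 f) (PowerSeries.coeff (R := H) p.2 g)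

/-- Membership in `𝔥¹ = ℚ ⊕ y𝔥`: every word of the support is empty or starts with `y`. -/
def inH1 (f : H) : Prop :=
  ∀ l ∈ f.coeff.support, FreeMonoid.toList l = [] ∨ (FreeMonoid.toList l).head? = some 1

/-- `α_A` on words: `α_A(1) = 1`, `α_A(vw) = v((1+xA)⁻¹ ⧢ w)`,
where `(1+xA)⁻¹ ⧢ w = Σ_n (-1)ⁿ (xⁿ ⧢ w) Aⁿ`. -/
noncomputable def alphaW : List Ltr → PS
  | [] => 1
  | v :: rest => PowerSeries.mk fun n => ((-1 : ℚ) ^ n) • (wrd [v] * shuf (Xh ^ n) (wrd rest))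

/-- The linear map `α_A : 𝔥 → 𝔥[[A]]`. -/
noncomputable def alphaA (f : H) : PS := f.coeff.sum fun u cu => cu • alphaW u.toList

open PowerSeries Finset

/-!
Write `σ(f) = (1 + xA)⁻¹ ⧢ f`. The shuffle recursion `xⁿ⁺¹ ⧢ cw = x(xⁿ ⧢ cw) + c(xⁿ⁺¹ ⧢ w)`
says `c σ(w) = (1 + xA) σ(cw)` for a letter `c`, and `(1 + xA) σ(1) = 1`; hence
`α_A = (1 + xA) σ` on all of `𝔥`. A letter `x` factors out of harmonic products on either
side, so `1 + xA` does too, and the theorem becomes `σ(w₁ * w₂) = (1 + xA)(σ(w₁) * σ(w₂))`.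
On words this follows by induction on the total length from the recursion defining `*`,
after multiplying both sides by the unit `1 + xA`.
-/

lemma wrd_nil : wrd [] = 1 := rfl

lemma wrd_append (l m : List Ltr) : wrd (l ++ m) = wrd l * wrd m := by
  rw [wrd, wrd, wrd, ← map_mul]
  rfl

lemma wrd_cons (a : Ltr) (l : List Ltr) : wrd (a :: l) = wrd [a] * wrd l :=
  wrd_append [a] l

lemma Xh_mul_wrd (l : List Ltr) : Xh * wrd l = wrd (0 :: l) := (wrd_cons 0 l).symm

lemma Xh_pow (n : ℕ) : Xh ^ n = wrd (List.replicate n 0) := by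
  induction n with
  | zero => rfl
  | succ n ih => rw [pow_succ', ih, Xh, ← wrd_cons, List.replicate_succ]

lemma single_eq_smul_wrd (a : FreeMonoid Ltr) (c : ℚ) :
    MonoidAlgebra.single a c = c • wrd a.toList := by
  rw [wrd, FreeMonoid.ofList_toList, MonoidAlgebra.of_apply, MonoidAlgebra.smul_single,
    smul_eq_mul, mul_one]

lemma ellt_eq_wrd (a b : Ltr) : ∃ c, ellt a b = wrd [c] := by
  unfold ellt
  split
  exacts [⟨1, rfl⟩, ⟨0, rfl⟩]

lemma wrd_induction {p : H → Prop} (f : H) (add : ∀ f g, p f → p g → p (f + g))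
    (smul_wrd : ∀ (l : List Ltr) (c : ℚ), p (c • wrd l)) : p f := by
  induction f using MonoidAlgebra.induction_linear with
  | zero => simpa using smul_wrd [] 0
  | add f g hf hg => exact add f g hf hg
  | single a c => rw [single_eq_smul_wrd]; exact smul_wrd _ c

noncomputable def wordBilin (m : List Ltr → List Ltr → H) (f g : H) : H :=
  f.coeff.sum fun u cu => g.coeff.sum fun v cv => (cu * cv) • m u.toList v.toList

namespace wordBilin

variable (m : List Ltr → List Ltr → H)

lemma wrd_wrd (u v : List Ltr) : wordBilin m (wrd u) (wrd v) = m u v := by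
  simp [wordBilin, wrd, MonoidAlgebra.of_apply, MonoidAlgebra.coeff_single]

lemma zero_left (g : H) : wordBilin m 0 g = 0 := by
  simp [wordBilin]

lemma zero_right (f : H) : wordBilin m f 0 = 0 := by
  simp [wordBilin]

lemma add_left (f f' g : H) : wordBilin m (f + f') g = wordBilin m f g + wordBilin m f' g := by
  unfold wordBilin
  rw [MonoidAlgebra.coeff_add, Finsupp.sum_add_index']
  · simp
  · intro u b b'
    simp [add_mul, add_smul, Finsupp.sum_add]

lemma add_right (f g g' : H) : wordBilin m f (g + g') = wordBilin m f g + wordBilin m f g' := by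
  unfold wordBilin
  rw [← Finsupp.sum_add]
  refine Finsupp.sum_congr fun u _ => ?_
  rw [MonoidAlgebra.coeff_add, Finsupp.sum_add_index']
  · simp
  · intro v b b'
    simp [mul_add, add_smul]

lemma smul_left (c : ℚ) (f g : H) : wordBilin m (c • f) g = c • wordBilin m f g := by
  unfold wordBilin
  rw [MonoidAlgebra.coeff_smul, Finsupp.sum_smul_index (by simp), Finsupp.smul_sum]
  refine Finsupp.sum_congr fun u _ => ?_
  rw [Finsupp.smul_sum]
  exact Finsupp.sum_congr fun v _ => by rw [mul_assoc, mul_smul]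

lemma smul_right (c : ℚ) (f g : H) : wordBilin m f (c • g) = c • wordBilin m f g := by
  unfold wordBilin
  rw [Finsupp.smul_sum]
  refine Finsupp.sum_congr fun u _ => ?_
  rw [MonoidAlgebra.coeff_smul, Finsupp.sum_smul_index (by simp), Finsupp.smul_sum]
  exact Finsupp.sum_congr fun v _ => by rw [smul_smul, mul_left_comm]

end wordBilin

lemma starW_nil_left (v : List Ltr) : starW [] v = wrd v := by simp [starW]

lemma starW_nil_right (u : List Ltr) : starW u [] = wrd u := by cases u <;> simp [starW]

lemma starW_cons_cons (a b : Ltr) (u v : List Ltr) :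
    starW (a :: u) (b :: v) =
      cc1 a b • (ellt a b * starW u (b :: v)) + cc2 a b • (ellt a b * starW (a :: u) v)
      + cc3 a b • (ellt a b * Xh * starW u v) := by
  rw [starW]

theorem starW_zero_cons (u v : List Ltr) :
    starW (0 :: u) v = Xh * starW u v ∧ starW u (0 :: v) = Xh * starW u v := by
  constructor
  · cases v with
    | nil => rw [starW_nil_right, starW_nil_right, wrd_cons]; rfl
    | cons b v =>
      obtain ⟨ih₁, ih₂⟩ := starW_zero_cons u v
      rw [starW_cons_cons]
      fin_cases b <;>
        simp only [cc1, cc2, cc3, ellt, Fin.isValue, Fin.zero_eta, Fin.mk_one, zero_ne_one,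
          one_ne_zero, and_true, and_false, and_self, ↓reduceIte, ih₁, ih₂, one_smul, neg_smul] <;>
        noncomm_ring
  · cases u with
    | nil => rw [starW_nil_left, starW_nil_left, wrd_cons]; rfl
    | cons a u =>
      obtain ⟨ih₁, ih₂⟩ := starW_zero_cons u v
      rw [starW_cons_cons]
      fin_cases a <;>
        simp only [cc1, cc2, cc3, ellt, Fin.isValue, Fin.zero_eta, Fin.mk_one, zero_ne_one,
          one_ne_zero, and_true, and_false, and_self, ↓reduceIte, ih₁, ih₂, one_smul, neg_smul] <;>
        noncomm_ring
termination_by u.length + v.length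

lemma star_wrd_wrd (u v : List Ltr) : star (wrd u) (wrd v) = starW u v :=
  wordBilin.wrd_wrd starW u v

lemma star_zero_left (g : H) : star 0 g = 0 := wordBilin.zero_left starW g
lemma star_zero_right (f : H) : star f 0 = 0 := wordBilin.zero_right starW f
lemma star_add_left (f f' g : H) : star (f + f') g = star f g + star f' g :=
  wordBilin.add_left starW f f' g
lemma star_add_right (f g g' : H) : star f (g + g') = star f g + star f g' :=
  wordBilin.add_right starW f g g'
lemma star_smul_left (c : ℚ) (f g : H) : star (c • f) g = c • star f g :=
  wordBilin.smul_left starW c f g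
lemma star_smul_right (c : ℚ) (f g : H) : star f (c • g) = c • star f g :=
  wordBilin.smul_right starW c f g

lemma star_one_left (g : H) : star 1 g = g := by
  induction g using wrd_induction with
  | add g g' hg hg' => rw [star_add_right, hg, hg']
  | smul_wrd v c => rw [star_smul_right, ← wrd_nil, star_wrd_wrd, starW_nil_left]

lemma star_one_right (f : H) : star f 1 = f := by
  induction f using wrd_induction with
  | add f f' hf hf' => rw [star_add_left, hf, hf']
  | smul_wrd u c => rw [star_smul_left, ← wrd_nil, star_wrd_wrd, starW_nil_right]

lemma star_Xh_mul_left (f g : H) : star (Xh * f) g = Xh * star f g := by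
  induction f using wrd_induction with
  | add f f' hf hf' => rw [mul_add, star_add_left, star_add_left, hf, hf', mul_add]
  | smul_wrd u c =>
    induction g using wrd_induction with
    | add g g' hg hg' => rw [star_add_right, star_add_right, hg, hg', mul_add]
    | smul_wrd v d =>
      rw [mul_smul_comm, star_smul_left, star_smul_left, star_smul_right, star_smul_right,
        Xh_mul_wrd, star_wrd_wrd, star_wrd_wrd, (starW_zero_cons u v).1,
        mul_smul_comm, mul_smul_comm]

lemma star_Xh_mul_right (f g : H) : star f (Xh * g) = Xh * star f g := by
  induction f using wrd_induction with
  | add f f' hf hf' => rw [star_add_left, star_add_left, hf, hf', mul_add]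
  | smul_wrd u c =>
    induction g using wrd_induction with
    | add g g' hg hg' => rw [mul_add, star_add_right, star_add_right, hg, hg', mul_add]
    | smul_wrd v d =>
      rw [mul_smul_comm, star_smul_left, star_smul_left, star_smul_right, star_smul_right,
        Xh_mul_wrd, star_wrd_wrd, star_wrd_wrd, (starW_zero_cons u v).2,
        mul_smul_comm, mul_smul_comm]

lemma star_wrd_mul_wrd_mul (a b : Ltr) (f g : H) :
    star (wrd [a] * f) (wrd [b] * g) =
      cc1 a b • (ellt a b * star f (wrd [b] * g)) + cc2 a b • (ellt a b * star (wrd [a] * f) g)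
      + cc3 a b • (ellt a b * Xh * star f g) := by
  induction f using wrd_induction with
  | add f f' hf hf' =>
    simp only [mul_add, star_add_left, hf, hf', smul_add]
    abel
  | smul_wrd u c =>
    induction g using wrd_induction with
    | add g g' hg hg' =>
      simp only [mul_add, star_add_right, hg, hg', smul_add]
      abel
    | smul_wrd v d =>
      simp only [mul_smul_comm, star_smul_left, star_smul_right, ← wrd_cons, star_wrd_wrd,
        starW_cons_cons]
      module

lemma shW_nil_left (v : List Ltr) : shW [] v = wrd v := by simp [shW]

lemma shW_nil_right (u : List Ltr) : shW u [] = wrd u := by cases u <;> simp [shW]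

lemma shuf_wrd_wrd (u v : List Ltr) : shuf (wrd u) (wrd v) = shW u v :=
  wordBilin.wrd_wrd shW u v

lemma shuf_add_right (f g g' : H) : shuf f (g + g') = shuf f g + shuf f g' :=
  wordBilin.add_right shW f g g'
lemma shuf_smul_right (c : ℚ) (f g : H) : shuf f (c • g) = c • shuf f g :=
  wordBilin.smul_right shW c f g

lemma shuf_one_left (g : H) : shuf 1 g = g := by
  induction g using wrd_induction with
  | add g g' hg hg' => rw [shuf_add_right, hg, hg']
  | smul_wrd v c => rw [shuf_smul_right, ← wrd_nil, shuf_wrd_wrd, shW_nil_left]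

lemma shuf_Xh_pow_one (n : ℕ) : shuf (Xh ^ n) 1 = Xh ^ n := by
  rw [Xh_pow, ← wrd_nil, shuf_wrd_wrd, shW_nil_right]

lemma shuf_Xh_pow_succ_wrd_mul (n : ℕ) (c : Ltr) (f : H) :
    shuf (Xh ^ (n + 1)) (wrd [c] * f)
      = Xh * shuf (Xh ^ n) (wrd [c] * f) + wrd [c] * shuf (Xh ^ (n + 1)) f := by
  induction f using wrd_induction with
  | add f f' hf hf' =>
    simp only [mul_add, shuf_add_right, hf, hf']
    abel
  | smul_wrd l q =>
    simp only [mul_smul_comm, shuf_smul_right, ← smul_add, ← wrd_cons, Xh_pow, shuf_wrd_wrd,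
      List.replicate_succ, shW]
    rfl

/-- `σ(f) = (1 + xA)⁻¹ ⧢ f`. -/
noncomputable def geomShuf (f : H) : PS := mk fun n => (-1 : ℚ) ^ n • shuf (Xh ^ n) f

noncomputable def onePlusXA : PS := 1 + C Xh * X

lemma coeff_geomShuf (n : ℕ) (f : H) : coeff n (geomShuf f) = (-1 : ℚ) ^ n • shuf (Xh ^ n) f :=
  coeff_mk _ _

lemma geomShuf_add (f g : H) : geomShuf (f + g) = geomShuf f + geomShuf g := by
  ext n : 1
  simp only [coeff_geomShuf, map_add, shuf_add_right, smul_add]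

lemma geomShuf_smul (c : ℚ) (f : H) : geomShuf (c • f) = c • geomShuf f := by
  ext n : 1
  simp only [coeff_geomShuf, coeff_smul, shuf_smul_right, smul_comm c]

lemma coeff_zero_onePlusXA_mul (F : PS) : coeff 0 (onePlusXA * F) = coeff 0 F := by
  simp [onePlusXA, add_mul, mul_assoc]

lemma coeff_succ_onePlusXA_mul (n : ℕ) (F : PS) :
    coeff (n + 1) (onePlusXA * F) = coeff (n + 1) F + Xh * coeff n F := by
  simp [onePlusXA, add_mul, mul_assoc, coeff_C_mul]

lemma isUnit_onePlusXA : IsUnit onePlusXA :=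
  isUnit_iff_constantCoeff.mpr (by simp [onePlusXA])

lemma commute_C_Xh_onePlusXA : Commute (C Xh) onePlusXA := by
  unfold onePlusXA
  exact (Commute.one_right _).add_right ((Commute.refl _).mul_right (commute_X _))

lemma onePlusXA_mul_geomShuf_one : onePlusXA * geomShuf 1 = 1 := by
  refine PowerSeries.ext fun n => ?_
  rcases n with _ | n
  · simp [coeff_zero_onePlusXA_mul, coeff_geomShuf, shuf_one_left]
  · rw [coeff_succ_onePlusXA_mul, coeff_geomShuf, coeff_geomShuf, shuf_Xh_pow_one, shuf_Xh_pow_one,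
      coeff_one, if_neg n.succ_ne_zero, pow_succ, pow_succ' Xh, mul_smul_comm, mul_neg_one,
      neg_smul, neg_add_cancel]

lemma onePlusXA_mul_geomShuf_wrd_mul (c : Ltr) (f : H) :
    onePlusXA * geomShuf (wrd [c] * f) = C (wrd [c]) * geomShuf f := by
  refine PowerSeries.ext fun n => ?_
  rcases n with _ | n
  · simp [coeff_zero_onePlusXA_mul, coeff_geomShuf, shuf_one_left, coeff_C_mul]
  · rw [coeff_succ_onePlusXA_mul, coeff_C_mul, coeff_geomShuf, coeff_geomShuf, coeff_geomShuf,
      shuf_Xh_pow_succ_wrd_mul, pow_succ, mul_smul_comm, mul_smul_comm]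
    module

lemma onePlusXA_mul_geomShuf_Xh_mul (f : H) :
    onePlusXA * geomShuf (Xh * f) = C Xh * geomShuf f :=
  onePlusXA_mul_geomShuf_wrd_mul 0 f

lemma geomShuf_Xh_mul {f : H} {G : PS} (hf : geomShuf f = onePlusXA * G) :
    geomShuf (Xh * f) = C Xh * G := by
  apply isUnit_onePlusXA.mul_left_cancel
  rw [onePlusXA_mul_geomShuf_Xh_mul, hf, ← mul_assoc, ← mul_assoc, commute_C_Xh_onePlusXA.eq]

lemma alphaW_eq (l : List Ltr) : alphaW l = onePlusXA * geomShuf (wrd l) := by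
  cases l with
  | nil => rw [alphaW, wrd_nil, onePlusXA_mul_geomShuf_one]
  | cons c r =>
    rw [wrd_cons, onePlusXA_mul_geomShuf_wrd_mul]
    ext n : 1
    rw [alphaW, coeff_mk, coeff_C_mul, coeff_geomShuf, mul_smul_comm]

lemma alphaA_add (f g : H) : alphaA (f + g) = alphaA f + alphaA g := by
  unfold alphaA
  exact Finsupp.sum_add_index' (fun _ => zero_smul ℚ _) (fun _ _ _ => add_smul _ _ _)

lemma alphaA_smul (c : ℚ) (f : H) : alphaA (c • f) = c • alphaA f := by
  unfold alphaA
  rw [MonoidAlgebra.coeff_smul, Finsupp.sum_smul_index (by simp), Finsupp.smul_sum]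
  exact Finsupp.sum_congr fun _ _ => mul_smul _ _ _

lemma alphaA_wrd (l : List Ltr) : alphaA (wrd l) = alphaW l := by
  simp [alphaA, wrd, MonoidAlgebra.of_apply, MonoidAlgebra.coeff_single]

lemma alphaA_eq (f : H) : alphaA f = onePlusXA * geomShuf f := by
  induction f using wrd_induction with
  | add f g hf hg => rw [alphaA_add, hf, hg, geomShuf_add, mul_add]
  | smul_wrd l c => rw [alphaA_smul, alphaA_wrd, alphaW_eq, geomShuf_smul, mul_smul_comm]

lemma coeff_starPS (n : ℕ) (F G : PS) :
    coeff n (starPS F G) = ∑ p ∈ antidiagonal n, star (coeff p.1 F) (coeff p.2 G) :=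
  coeff_mk _ _

lemma starPS_add_left (F F' G : PS) : starPS (F + F') G = starPS F G + starPS F' G := by
  ext n : 1
  simp only [coeff_starPS, map_add, star_add_left, Finset.sum_add_distrib]

lemma starPS_add_right (F G G' : PS) : starPS F (G + G') = starPS F G + starPS F G' := by
  ext n : 1
  simp only [coeff_starPS, map_add, star_add_right, Finset.sum_add_distrib]

lemma starPS_smul_left (c : ℚ) (F G : PS) : starPS (c • F) G = c • starPS F G := by
  ext n : 1
  simp only [coeff_starPS, coeff_smul, star_smul_left, Finset.smul_sum]

lemma starPS_smul_right (c : ℚ) (F G : PS) : starPS F (c • G) = c • starPS F G := by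
  ext n : 1
  simp only [coeff_starPS, coeff_smul, star_smul_right, Finset.smul_sum]

lemma starPS_one_left (G : PS) : starPS 1 G = G := by
  ext n : 1
  rw [coeff_starPS, Finset.sum_eq_single (0, n)]
  · rw [coeff_one, if_pos rfl, star_one_left]
  · rintro ⟨_ | i, j⟩ _ hne
    · simp_all
    · rw [coeff_one, if_neg i.succ_ne_zero, star_zero_left]
  · simp

lemma starPS_one_right (F : PS) : starPS F 1 = F := by
  ext n : 1
  rw [coeff_starPS, Finset.sum_eq_single (n, 0)]
  · rw [coeff_one, if_pos rfl, star_one_right]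
  · rintro ⟨i, _ | j⟩ _ hne
    · simp_all
    · rw [coeff_one, if_neg j.succ_ne_zero, star_zero_right]
  · simp

lemma starPS_X_mul_left (F G : PS) : starPS (X * F) G = X * starPS F G := by
  ext (_ | n) : 1
  · simp [coeff_starPS, star_zero_left]
  · simp [coeff_starPS, Finset.Nat.sum_antidiagonal_succ, star_zero_left]

lemma starPS_X_mul_right (F G : PS) : starPS F (X * G) = X * starPS F G := by
  ext (_ | n) : 1
  · simp [coeff_starPS, star_zero_right]
  · simp [coeff_starPS, Finset.Nat.sum_antidiagonal_succ', star_zero_right]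

lemma starPS_C_Xh_mul_left (F G : PS) : starPS (C Xh * F) G = C Xh * starPS F G := by
  ext n : 1
  simp only [coeff_starPS, coeff_C_mul, star_Xh_mul_left, Finset.mul_sum]

lemma starPS_C_Xh_mul_right (F G : PS) : starPS F (C Xh * G) = C Xh * starPS F G := by
  ext n : 1
  simp only [coeff_starPS, coeff_C_mul, star_Xh_mul_right, Finset.mul_sum]

lemma starPS_onePlusXA_mul_left (F G : PS) :
    starPS (onePlusXA * F) G = onePlusXA * starPS F G := by
  simp only [onePlusXA, add_mul, one_mul, mul_assoc, starPS_add_left, starPS_C_Xh_mul_left,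
    starPS_X_mul_left]

lemma starPS_onePlusXA_mul_right (F G : PS) :
    starPS F (onePlusXA * G) = onePlusXA * starPS F G := by
  simp only [onePlusXA, add_mul, one_mul, mul_assoc, starPS_add_right, starPS_C_Xh_mul_right,
    starPS_X_mul_right]

lemma starPS_C_wrd_mul_C_wrd_mul (a b : Ltr) (F G : PS) :
    starPS (C (wrd [a]) * F) (C (wrd [b]) * G) =
      cc1 a b • (C (ellt a b) * starPS F (C (wrd [b]) * G))
      + cc2 a b • (C (ellt a b) * starPS (C (wrd [a]) * F) G)
      + cc3 a b • (C (ellt a b * Xh) * starPS F G) := by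
  ext n : 1
  simp only [coeff_starPS, coeff_C_mul, coeff_smul, map_add, star_wrd_mul_wrd_mul,
    Finset.sum_add_distrib, Finset.mul_sum, Finset.smul_sum]

theorem geomShuf_starW : ∀ u v : List Ltr,
    geomShuf (starW u v) = onePlusXA * starPS (geomShuf (wrd u)) (geomShuf (wrd v))
  | [], v => by
    rw [starW_nil_left, ← starPS_onePlusXA_mul_left, wrd_nil, onePlusXA_mul_geomShuf_one,
      starPS_one_left]
  | a :: u, [] => by
    rw [starW_nil_right, ← starPS_onePlusXA_mul_right, wrd_nil, onePlusXA_mul_geomShuf_one,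
      starPS_one_right]
  | a :: u, b :: v => by
    obtain ⟨c, hc⟩ := ellt_eq_wrd a b
    have ih₁ := geomShuf_starW u (b :: v)
    have ih₂ := geomShuf_starW (a :: u) v
    have ih₃ := geomShuf_Xh_mul (geomShuf_starW u v)
    apply isUnit_onePlusXA.mul_left_cancel
    calc onePlusXA * geomShuf (starW (a :: u) (b :: v))
      _ = cc1 a b • (C (wrd [c]) * geomShuf (starW u (b :: v)))
          + cc2 a b • (C (wrd [c]) * geomShuf (starW (a :: u) v))
          + cc3 a b • (C (wrd [c] * Xh) * starPS (geomShuf (wrd u)) (geomShuf (wrd v))) := by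
        simp only [starW_cons_cons, hc, mul_assoc, geomShuf_add, geomShuf_smul, mul_add,
          mul_smul_comm, onePlusXA_mul_geomShuf_wrd_mul, ih₃, map_mul]
      _ = starPS (C (wrd [a]) * geomShuf (wrd u)) (C (wrd [b]) * geomShuf (wrd v)) := by
        rw [starPS_C_wrd_mul_C_wrd_mul, hc, ih₁, ih₂, wrd_cons a u, wrd_cons b v,
          ← onePlusXA_mul_geomShuf_wrd_mul, ← onePlusXA_mul_geomShuf_wrd_mul,
          starPS_onePlusXA_mul_left, starPS_onePlusXA_mul_right]
      _ = onePlusXA * (onePlusXA * starPS (geomShuf (wrd (a :: u))) (geomShuf (wrd (b :: v)))) := by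
        rw [wrd_cons a u, wrd_cons b v, ← onePlusXA_mul_geomShuf_wrd_mul,
          ← onePlusXA_mul_geomShuf_wrd_mul, starPS_onePlusXA_mul_left,
          starPS_onePlusXA_mul_right]

theorem geomShuf_star (f g : H) :
    geomShuf (star f g) = onePlusXA * starPS (geomShuf f) (geomShuf g) := by
  induction f using wrd_induction with
  | add f f' hf hf' =>
    rw [star_add_left, geomShuf_add, hf, hf', geomShuf_add, starPS_add_left, mul_add]
  | smul_wrd u c =>
    induction g using wrd_induction with
    | add g g' hg hg' =>
      rw [star_add_right, geomShuf_add, hg, hg', geomShuf_add, starPS_add_right, mul_add]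
    | smul_wrd v d =>
      simp only [star_smul_left, star_smul_right, star_wrd_wrd, geomShuf_smul, geomShuf_starW,
        starPS_smul_left, starPS_smul_right, mul_smul_comm]

theorem stmt13_general (w₁ w₂ : H) :
    alphaA (star w₁ w₂) = starPS (alphaA w₁) (alphaA w₂) := by
  rw [alphaA_eq, alphaA_eq, alphaA_eq, geomShuf_star, starPS_onePlusXA_mul_left,
    starPS_onePlusXA_mul_right]

/-- `α_A` preserves the harmonic product:
`α_A(w₁ * w₂) = α_A(w₁) * α_A(w₂)` for `w₁, w₂ ∈ 𝔥¹`. -/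
theorem stmt13 (w₁ w₂ : H) (h₁ : inH1 w₁) (h₂ : inH1 w₂) :
    alphaA (star w₁ w₂) = starPS (alphaA w₁) (alphaA w₂) :=
  stmt13_general w₁ w₂
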